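/- arXiv:2210.16920 — 2 statements merged into one kernel-verified Lean document; each statement's English description precedes it below -/
import Mathlib

section
/- Let (H,μ) be a countable unital locally standard measure algebra and let St_n ⊂ H be a standard measure subalgebra containing the identity of H. Then every automorphism of the measure algebra St_n extends to an automorphism of the measure algebra H. Moreover, St_n is a tensor factor of H: there is a measure subalgebra H̄ ⊆ H with St_n ⊗ H̄ = H. -/
open scoped BigOperators

noncomputable section

/-! ### Steinitz numbers -/

/-- A Steinitz number: a formal product `∏ p ^ r_p` over all primes, with exponents
`r_p ∈ ℕ ∪ {∞}`, encoded as the function sending each prime to its exponent. -/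
def SteinitzNumber : Type := Nat.Primes → ℕ∞

namespace SteinitzNumber

instance : One SteinitzNumber := ⟨fun _ => 0⟩

instance : Mul SteinitzNumber := ⟨fun s t p => s p + t p⟩

/-- The Steinitz number associated with a positive integer `n`. -/
def ofNat (n : ℕ) : SteinitzNumber := fun p => (n.factorization p : ℕ∞)

/-- `b ∈ Ω(s)`: the positive integer `b` divides the Steinitz number `s`. -/
def NatDvd (b : ℕ) (s : SteinitzNumber) : Prop :=
  0 < b ∧ ∀ p : Nat.Primes, (b.factorization p : ℕ∞) ≤ s p

/-- The quotient `s / b` of a Steinitz number by a positive integer dividing it. -/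
def divNat (s : SteinitzNumber) (b : ℕ) : SteinitzNumber :=
  fun p => s p - (b.factorization p : ℕ∞)

/-- An infinite Steinitz number is one which is not a positive integer. -/
def Infinite (s : SteinitzNumber) : Prop := ∀ n : ℕ, s ≠ ofNat n

/-- Steinitz numbers `s` and `t` are rationally connected: `t = (a/b)·s` for positive
integers `a, b` (expressed by cross multiplication). -/
def RationallyConnected (s t : SteinitzNumber) : Prop :=
  ∃ a b : ℕ, 0 < a ∧ 0 < b ∧ ofNat b * t = ofNat a * s

/-- `s₁` finitely divides `s₂`: `s₁ = s₂ / b` for some `b ∈ Ω(s₂)`. -/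
def FinDvd (s₁ s₂ : SteinitzNumber) : Prop :=
  ∃ b : ℕ, NatDvd b s₂ ∧ ofNat b * s₁ = s₂

/-- `s₁ ≤ s₂` iff `s₁ = (a/b)·s₂` with `b ∈ Ω(s₂)` and `1 ≤ a ≤ b`. -/
def Le (s₁ s₂ : SteinitzNumber) : Prop :=
  ∃ a b : ℕ, 0 < a ∧ a ≤ b ∧ NatDvd b s₂ ∧ ofNat b * s₁ = ofNat a * s₂

/-- A saturated set of Steinitz numbers. -/
def Saturated (S : Set SteinitzNumber) : Prop :=
  (∀ s₁ ∈ S, ∀ s₂ ∈ S, RationallyConnected s₁ s₂) ∧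
  (∀ s₂ ∈ S, ∀ s₁, FinDvd s₁ s₂ → s₁ ∈ S) ∧
  (∀ s ∈ S, ∀ n : ℕ, ofNat n * s ∈ S → ∀ k : ℕ, 1 ≤ k → k ≤ n → ofNat k * s ∈ S)

/-- `S(∞, s) = { (a/b)·s : a ∈ ℕ, b ∈ Ω(s) }`. -/
def SInf (s : SteinitzNumber) : Set SteinitzNumber :=
  {t | ∃ a b : ℕ, 0 < a ∧ NatDvd b s ∧ ofNat b * t = ofNat a * s}

/-- `S(r, s) = { (a/b)·s : a, b ∈ ℕ, b ∈ Ω(s), a ≤ r·b }`. -/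
def SBdd (r : ℝ) (s : SteinitzNumber) : Set SteinitzNumber :=
  {t | ∃ a b : ℕ, 0 < a ∧ NatDvd b s ∧ (a : ℝ) ≤ r * b ∧ ofNat b * t = ofNat a * s}

/-- `S⁺(r, s) = { (a/b)·s : a, b ∈ ℕ, b ∈ Ω(s), a < r·b }`. -/
def SBddPlus (r : ℝ) (s : SteinitzNumber) : Set SteinitzNumber :=
  {t | ∃ a b : ℕ, 0 < a ∧ NatDvd b s ∧ (a : ℝ) < r * b ∧ ofNat b * t = ofNat a * s}

end SteinitzNumber

/-! ### Measure algebras -/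

/-- A measure algebra: a Boolean algebra (an associative, commutative algebra over `𝔽₂`
in which every element is idempotent) equipped with a measure `μ` which is positive on
nonzero elements and additive on orthogonal pairs. -/
structure MeasureAlgebra : Type 1 where
  carrier : Type
  [ring : NonUnitalCommRing carrier]
  idem : ∀ x : carrier, x * x = x
  mu : carrier → ℝ
  mu_nonneg : ∀ a, 0 ≤ mu a
  mu_eq_zero_iff : ∀ a, mu a = 0 ↔ a = 0
  mu_add : ∀ a b : carrier, a * b = 0 → mu (a + b) = mu a + mu b

attribute [instance] MeasureAlgebra.ring

namespace MeasureAlgebra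

/-- Isomorphism of measure algebras: a Boolean algebra isomorphism preserving the measures. -/
def Isomorphic (H₁ H₂ : MeasureAlgebra) : Prop :=
  ∃ φ : H₁.carrier ≃+* H₂.carrier, ∀ a, H₂.mu (φ a) = H₁.mu a

/-- Scalar equivalence of measure algebras: a Boolean algebra isomorphism multiplying
the measure by a positive constant `α`. -/
def ScalarEquivalent (H₁ H₂ : MeasureAlgebra) : Prop :=
  ∃ α : ℝ, 0 < α ∧ ∃ φ : H₁.carrier ≃+* H₂.carrier, ∀ a, H₂.mu (φ a) = α * H₁.mu a

/-- The measure subalgebra of a measure algebra supported on a subring, with the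
restricted measure. -/
def restrict (H : MeasureAlgebra) (S : NonUnitalSubring H.carrier) : MeasureAlgebra where
  carrier := S
  idem := fun x => Subtype.ext (H.idem x.1)
  mu := fun x => H.mu x.1
  mu_nonneg := fun a => H.mu_nonneg a.1
  mu_eq_zero_iff := fun a => by
    rw [H.mu_eq_zero_iff a.1]
    exact ⟨fun h => Subtype.ext h, fun h => congrArg Subtype.val h⟩
  mu_add := fun a b hab => H.mu_add a.1 b.1 (congrArg Subtype.val hab)

/-- The standard measure algebra `Stₙ = 𝔽₂ⁿ` with `μ(x₁, …, xₙ) = (x₁ + ⋯ + xₙ)/n`. -/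
def St (n : ℕ) : MeasureAlgebra where
  carrier := Fin n → ZMod 2
  idem := fun x => funext fun i => by
    have h : ∀ a : ZMod 2, a * a = a := by decide
    exact h (x i)
  mu := fun x => (∑ i, ((x i).val : ℝ)) / n
  mu_nonneg := fun a => by positivity
  mu_eq_zero_iff := fun a => by
    constructor
    · intro h
      rcases Nat.eq_zero_or_pos n with hn | hn
      · subst hn; exact funext fun i => i.elim0
      · have hne : ((n : ℝ)) ≠ 0 := by positivity
        have h2 : (∑ i, ((a i).val : ℝ)) = 0 := by
          rcases div_eq_zero_iff.mp h with h' | h'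
          · exact h'
          · exact absurd h' hne
        have h3 := (Finset.sum_eq_zero_iff_of_nonneg
          (fun i _ => by positivity : ∀ i ∈ Finset.univ, (0:ℝ) ≤ ((a i).val : ℝ))).mp h2
        funext i
        have h4 : ((a i).val : ℝ) = 0 := h3 i (Finset.mem_univ i)
        have h5 : (a i).val = 0 := by exact_mod_cast h4
        exact (ZMod.val_eq_zero _).mp h5
    · intro h; subst h; simp
  mu_add := fun a b hab => by
    have key : ∀ u v : ZMod 2, u * v = 0 → (u + v).val = u.val + v.val := by decide
    have h : ∀ i, (((a + b) i).val : ℝ) = ((a i).val : ℝ) + ((b i).val : ℝ) := by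
      intro i
      have h0 : a i * b i = 0 := congrFun hab i
      have h1 := key (a i) (b i) h0
      show (((a i + b i)).val : ℝ) = _
      rw [h1]
      push_cast
      ring
    show (∑ i, (((a + b) i).val : ℝ)) / n
        = (∑ i, ((a i).val : ℝ)) / n + (∑ i, ((b i).val : ℝ)) / n
    rw [← add_div, ← Finset.sum_add_distrib]
    congr 1
    exact Finset.sum_congr rfl fun i _ => h i

/-- A measure algebra is unital if it has an identity element of measure `1`. -/
def Unital (H : MeasureAlgebra) : Prop :=
  ∃ e : H.carrier, (∀ x, e * x = x) ∧ H.mu e = 1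

/-- A measure algebra is locally standard if every finite subset is contained in a
measure subalgebra scalar equivalent to a standard one. -/
def LocallyStandard (H : MeasureAlgebra) : Prop :=
  ∀ t : Finset H.carrier, ∃ (S : NonUnitalSubring H.carrier) (n : ℕ), 0 < n ∧
    (↑t : Set H.carrier) ⊆ S ∧ (H.restrict S).ScalarEquivalent (St n)

/-- For an (idempotent) element `h`, the subring `hH = {x | h·x = x}`. -/
def cornerSubring (H : MeasureAlgebra) (h : H.carrier) : NonUnitalSubring H.carrier where
  carrier := {x | h * x = x}
  zero_mem' := mul_zero h
  add_mem' := by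
    intro a b ha hb
    simp only [Set.mem_setOf_eq] at *
    rw [mul_add, ha, hb]
  neg_mem' := by
    intro a ha
    simp only [Set.mem_setOf_eq] at *
    rw [mul_neg, ha]
  mul_mem' := by
    intro a b ha hb
    simp only [Set.mem_setOf_eq] at *
    rw [← mul_assoc, ha]

/-- The unital measure algebra `H_h = (hH, μ(·)/μ(h))`. -/
def corner (H : MeasureAlgebra) (h : H.carrier) : MeasureAlgebra where
  carrier := H.cornerSubring h
  idem := fun x => Subtype.ext (H.idem x.1)
  mu := fun x => H.mu x.1 / H.mu h
  mu_nonneg := fun a => div_nonneg (H.mu_nonneg a.1) (H.mu_nonneg h)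
  mu_eq_zero_iff := fun a => by
    constructor
    · intro ha
      rcases div_eq_zero_iff.mp ha with h' | h'
      · exact Subtype.ext ((H.mu_eq_zero_iff a.1).mp h')
      · have hh : h = 0 := (H.mu_eq_zero_iff h).mp h'
        have h2 : h * (a : H.carrier) = a := a.2
        apply Subtype.ext
        show (a : H.carrier) = 0
        generalize hx : (a : H.carrier) = x at h2 ⊢
        rw [← h2, hh, zero_mul]
    · intro h'
      subst h'
      have h0 : H.mu ((0 : H.cornerSubring h) : H.carrier) = 0 :=
        (H.mu_eq_zero_iff _).mpr rfl
      show H.mu ((0 : H.cornerSubring h) : H.carrier) / H.mu h = 0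
      rw [h0, zero_div]
  mu_add := fun a b hab => by
    have : H.mu ((a : H.carrier) + b) = H.mu a + H.mu b :=
      H.mu_add a.1 b.1 (congrArg Subtype.val hab)
    show H.mu ((a + b : H.cornerSubring h) : H.carrier) / H.mu h = _
    rw [show ((a + b : H.cornerSubring h) : H.carrier) = (a : H.carrier) + b from rfl,
      this, add_div]

/-- `D(H)`: the set of `n` such that `H` has a subalgebra containing the identity of `H`
and isomorphic to the standard measure algebra `Stₙ`. -/
def D (H : MeasureAlgebra) : Set ℕ :=
  {n | ∃ S : NonUnitalSubring H.carrier,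
    (∃ e ∈ S, ∀ x : H.carrier, e * x = x) ∧ (H.restrict S).Isomorphic (St n)}

/-- The Steinitz number `st(H)` of a (unital locally standard) measure algebra:
the least common multiple of `D(H)`. -/
def st (H : MeasureAlgebra) : SteinitzNumber :=
  fun p => ⨆ n ∈ H.D, (n.factorization p : ℕ∞)

/-- The spectrum of a measure algebra: the set of Steinitz numbers `st(H_h)` for `h ≠ 0`. -/
def Spec (H : MeasureAlgebra) : Set SteinitzNumber :=
  {s | ∃ h : H.carrier, h ≠ 0 ∧ (H.corner h).st = s}

end MeasureAlgebra

namespace MeasureAlgebra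

/-- The multiplication map `S ⊗ T → H` for two measure subalgebras `S, T` of `H`
(the tensor product of `𝔽₂`-modules of characteristic-two abelian groups agrees with
the tensor product over `ℤ`). -/
def mulTensor (H : MeasureAlgebra) (S T : NonUnitalSubring H.carrier) :
    TensorProduct ℤ ↥S ↥T →ₗ[ℤ] H.carrier :=
  TensorProduct.lift
    (LinearMap.mk₂ ℤ (fun (s : ↥S) (t : ↥T) => (s : H.carrier) * (t : H.carrier))
      (fun m₁ m₂ n => by push_cast; exact add_mul _ _ _)
      (fun c m n => smul_mul_assoc c (m : H.carrier) (n : H.carrier))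
      (fun m n₁ n₂ => by push_cast; exact mul_add _ _ _)
      (fun c m n => mul_smul_comm c (m : H.carrier) (n : H.carrier)))

/-- `H = S ⊗ T` as measure algebras: the multiplication map `S ⊗ T → H` is bijective
and the measure is multiplicative on products, `μ(s·t) = μ(s)·μ(t)`. -/
def IsTensorFactorization (H : MeasureAlgebra) (S T : NonUnitalSubring H.carrier) : Prop :=
  (∀ s ∈ S, ∀ t ∈ T, H.mu (s * t) = H.mu s * H.mu t) ∧
  Function.Bijective (H.mulTensor S T)

end MeasureAlgebra

/-!
Refine the atoms `a₁, …, aₙ` of `S`, using local standardness, into grids of atoms `b (i, j)` of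
equal measure with `∑ⱼ b (i, j) = aᵢ`; since `H` is countable, a sequence of ever finer grids
exhausts `H`. The column sums `colⱼ = ∑ᵢ b (i, j)` of all the grids generate the complement `T`,
and `b (i, j) = aᵢ · colⱼ` makes multiplication `S ⊗ T → H` onto, while
`μ (∑ᵢ aᵢ tᵢ) = ∑ᵢ μ aᵢ · μ tᵢ` makes it injective. An automorphism `φ` of `S` then extends to `H`
as `φ ⊗ id`, and the same formula shows that this extension preserves `μ`.
-/

theorem exists_equiv_prod_fin_of_pairwise_disjoint {α β : Type*} [Fintype α] [Fintype β]
    [DecidableEq α] {A : β → Finset α} (hA : Pairwise fun x y => Disjoint (A x) (A y)) {s : ℕ}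
    (hs : ∀ x, (A x).card = s) (hcard : Fintype.card β * s = Fintype.card α) :
    ∃ E : β × Fin s ≃ α, ∀ x, Finset.univ.image (fun t => E (x, t)) = A x := by
  let ε : ∀ x, Fin s ≃ A x := fun x => ((A x).equivFinOfCardEq (hs x)).symm
  have hF : Function.Injective fun p : β × Fin s => (ε p.1 p.2 : α) := by
    rintro ⟨x, t⟩ ⟨y, u⟩ h
    replace h : (ε x t : α) = ε y u := h
    obtain rfl : x = y := by
      by_contra hxy
      exact Finset.disjoint_left.mp (hA hxy) (ε x t).2 (h ▸ (ε y u).2)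
    simpa using (ε x).injective (Subtype.ext h)
  let E := Equiv.ofBijective _
    ((Fintype.bijective_iff_injective_and_card _).mpr ⟨hF, by simp [hcard]⟩)
  refine ⟨E, fun x => Finset.eq_of_subset_of_card_le ?_ ?_⟩
  · intro a ha
    obtain ⟨t, -, rfl⟩ := Finset.mem_image.mp ha
    exact (ε x t).2
  · rw [hs, Finset.card_image_of_injective (f := fun t => E (x, t)) _
      (E.injective.comp (Prod.mk_right_injective x))]
    simp

theorem exists_seq_monotone_forall_exists {X Y P : Type*} [Countable Y] [Nonempty Y]
    [Preorder P] (c : X → P) (R : X → Y → Prop) (x₀ : X)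
    (hstep : ∀ x y, ∃ x', c x ≤ c x' ∧ R x' y) :
    ∃ f : ℕ → X, Monotone (c ∘ f) ∧ ∀ y, ∃ k, R (f k) y := by
  choose next hle hR using hstep
  obtain ⟨enum, henum⟩ := exists_surjective_nat Y
  let f : ℕ → X := fun k => Nat.rec x₀ (fun k x => next x (enum k)) k
  refine ⟨f, monotone_nat_of_le_succ fun k => hle (f k) (enum k), fun y => ?_⟩
  obtain ⟨k, rfl⟩ := henum y
  exact ⟨k + 1, hR (f k) (enum k)⟩

theorem span_range_eq_top_of_forall_exists_sum {R M ι : Type*} [Semiring R] [AddCommMonoid M]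
    [Module R M] {a : ι → M} (h : ∀ x, ∃ A : Finset ι, x = ∑ i ∈ A, a i) :
    Submodule.span R (Set.range a) = ⊤ :=
  eq_top_iff.mpr fun x _ => by
    obtain ⟨A, rfl⟩ := h x
    exact sum_mem fun i _ => Submodule.subset_span ⟨i, rfl⟩

theorem exists_eq_sum_tmul_of_span_eq_top {R M N ι : Type*} [CommSemiring R] [AddCommMonoid M]
    [Module R M] [AddCommMonoid N] [Module R N] [Fintype ι] {a : ι → M}
    (ha : Submodule.span R (Set.range a) = ⊤) (u : TensorProduct R M N) :
    ∃ t : ι → N, u = ∑ i, a i ⊗ₜ[R] t i := by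
  induction u using TensorProduct.induction_on with
  | zero => exact ⟨0, by simp⟩
  | tmul x y =>
    have hx : x ∈ Submodule.span R (Set.range a) := ha ▸ Submodule.mem_top
    obtain ⟨c, rfl⟩ := (Submodule.mem_span_range_iff_exists_fun R).mp hx
    exact ⟨fun i => c i • y, by simp [TensorProduct.sum_tmul, TensorProduct.smul_tmul]⟩
  | add u v hu hv =>
    obtain ⟨t, rfl⟩ := hu
    obtain ⟨t', rfl⟩ := hv
    exact ⟨t + t', by simp [TensorProduct.tmul_add, Finset.sum_add_distrib]⟩

namespace MeasureAlgebra

variable {H : MeasureAlgebra}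

theorem add_self (x : H.carrier) : x + x = 0 := by
  have h := H.idem (x + x)
  rw [mul_add, add_mul, H.idem x] at h
  exact add_eq_left.mp h

theorem mu_zero : H.mu 0 = 0 := (H.mu_eq_zero_iff 0).mpr rfl

theorem sum_add_sum_eq_sum_symmDiff {ι : Type*} [DecidableEq ι] (g : ι → H.carrier)
    (A B : Finset ι) : ∑ a ∈ A, g a + ∑ a ∈ B, g a = ∑ a ∈ symmDiff A B, g a := by
  have hunion : A ∪ B = symmDiff A B ∪ A ∩ B := (symmDiff_sup_inf A B).symm
  have hdisj : Disjoint (symmDiff A B) (A ∩ B) := disjoint_symmDiff_inf A B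
  rw [← Finset.sum_union_inter, hunion, Finset.sum_union hdisj, add_assoc,
    ← Finset.sum_add_distrib]
  simp only [add_self, Finset.sum_const_zero, add_zero]

section Pairwise

variable {ι : Type*} {g : ι → H.carrier} (hg : Pairwise fun a b => g a * g b = 0)
include hg

theorem mul_sum_of_pairwise [DecidableEq ι] (a : ι) (A : Finset ι) :
    g a * ∑ b ∈ A, g b = if a ∈ A then g a else 0 := by
  rw [Finset.mul_sum]
  split_ifs with ha
  · rw [Finset.sum_eq_single_of_mem a ha fun b _ hba => hg hba.symm, H.idem]
  · exact Finset.sum_eq_zero fun b hb => hg fun hab => ha (hab ▸ hb)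

theorem sum_mul_sum_of_pairwise [DecidableEq ι] (A B : Finset ι) :
    (∑ a ∈ A, g a) * ∑ b ∈ B, g b = ∑ a ∈ A ∩ B, g a := by
  rw [Finset.sum_mul, Finset.sum_congr rfl fun a _ => mul_sum_of_pairwise hg a B,
    ← Finset.sum_filter, Finset.filter_mem_eq_inter]

theorem mu_sum_of_pairwise (A : Finset ι) : H.mu (∑ a ∈ A, g a) = ∑ a ∈ A, H.mu (g a) := by
  classical
  induction A using Finset.induction_on with
  | empty => simp [mu_zero]
  | insert a A ha ih =>
    rw [Finset.sum_insert ha, Finset.sum_insert ha, H.mu_add _ _ (by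
      rw [mul_sum_of_pairwise hg, if_neg ha]), ih]

theorem mu_sum_of_pairwise_of_forall_eq {c : ℝ} (hc : ∀ a, H.mu (g a) = c) (A : Finset ι) :
    H.mu (∑ a ∈ A, g a) = A.card * c := by
  simp [mu_sum_of_pairwise hg, hc]

theorem mem_closure_range_iff {x : H.carrier} :
    x ∈ NonUnitalSubring.closure (Set.range g) ↔ ∃ A : Finset ι, x = ∑ a ∈ A, g a := by
  classical
  refine ⟨fun hx => ?_, ?_⟩
  · induction hx using NonUnitalSubring.closure_induction with
    | mem x hx =>
      obtain ⟨a, rfl⟩ := hx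
      exact ⟨{a}, (Finset.sum_singleton _ _).symm⟩
    | zero => exact ⟨∅, Finset.sum_empty.symm⟩
    | add x y _ _ hx hy =>
      obtain ⟨A, rfl⟩ := hx
      obtain ⟨B, rfl⟩ := hy
      exact ⟨symmDiff A B, sum_add_sum_eq_sum_symmDiff g A B⟩
    | neg x _ hx => rwa [neg_eq_of_add_eq_zero_left (add_self x)]
    | mul x y _ _ hx hy =>
      obtain ⟨A, rfl⟩ := hx
      obtain ⟨B, rfl⟩ := hy
      exact ⟨A ∩ B, sum_mul_sum_of_pairwise hg A B⟩
  · rintro ⟨A, rfl⟩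
    exact sum_mem fun a _ => NonUnitalSubring.subset_closure ⟨a, rfl⟩

theorem eq_sum_of_forall_mul_eq [Fintype ι] (hg0 : ∀ i, g i ≠ 0)
    (hspan : ∀ x, ∃ A : Finset ι, x = ∑ i ∈ A, g i) {u : H.carrier} (hu : ∀ x, u * x = x) :
    u = ∑ i, g i := by
  classical
  obtain ⟨A, rfl⟩ := hspan u
  suffices hA : A = Finset.univ by rw [hA]
  refine Finset.eq_univ_of_forall fun i => by_contra fun hi => hg0 i ?_
  have h := hu (g i)
  rwa [mul_comm, mul_sum_of_pairwise hg, if_neg hi, eq_comm] at h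

end Pairwise

variable {m : ℕ} {K : MeasureAlgebra}

-- `St m` with its carrier unfolded to `Fin m → ZMod 2`, whose ring structure `rw` and `simp` see.
theorem isomorphic_St_iff : K.Isomorphic (St m) ↔
    ∃ ψ : K.carrier ≃+* (Fin m → ZMod 2), ∀ a, (∑ i, ((ψ a i).val : ℝ)) / m = K.mu a :=
  Iff.rfl

theorem scalarEquivalent_St_iff : K.ScalarEquivalent (St m) ↔ ∃ α : ℝ, 0 < α ∧
    ∃ ψ : K.carrier ≃+* (Fin m → ZMod 2), ∀ a, (∑ i, ((ψ a i).val : ℝ)) / m = α * K.mu a :=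
  Iff.rfl

theorem exists_atoms_of_isomorphic_St (hK : K.Isomorphic (St m)) :
    ∃ g : Fin m → K.carrier, Pairwise (fun a b => g a * g b = 0) ∧ (∀ l, g l ≠ 0) ∧
      (∀ l, K.mu (g l) = 1 / m) ∧ ∀ x, ∃ A : Finset (Fin m), x = ∑ l ∈ A, g l := by
  classical
  obtain ⟨ψ, hψ⟩ := isomorphic_St_iff.mp hK
  have hμ : ∀ l, K.mu (ψ.symm (Pi.single l 1)) = 1 / m := fun l => by
    rw [← hψ, ψ.apply_symm_apply, Finset.sum_congr rfl fun i _ =>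
      Pi.apply_single (fun _ (z : ZMod 2) => (z.val : ℝ)) (fun _ => by simp) l 1 i,
      Fintype.sum_pi_single', ZMod.val_one, Nat.cast_one]
  refine ⟨fun l => ψ.symm (Pi.single l 1), fun a b hab => ?_, fun l h => ?_, hμ, fun x => ?_⟩
  · have hsingle : (Pi.single a 1 * Pi.single b 1 : Fin m → ZMod 2) = 0 := by
      ext i
      simp only [Pi.mul_apply, Pi.single_apply, Pi.zero_apply]
      split_ifs with ha hb <;> simp_all
    simp only [← map_mul, hsingle, map_zero]
  · have h1 := hμ l
    rw [show ψ.symm (Pi.single l 1) = 0 from h, mu_zero, eq_comm, one_div, inv_eq_zero,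
      Nat.cast_eq_zero] at h1
    exact l.pos.ne' h1
  · refine ⟨Finset.univ.filter fun l => ψ x l = 1, ?_⟩
    have hbit : ∀ z : ZMod 2, (if z = 1 then 1 else 0) = z := by decide
    have hx : ψ x = ∑ l ∈ Finset.univ.filter fun l => ψ x l = 1, Pi.single l 1 := by
      ext i
      simp [Finset.sum_apply, Pi.single_apply, hbit]
    simp only [← map_sum, ← hx, ψ.symm_apply_apply]

theorem map_eq_one_of_forall_mul_eq {R : Type*} [NonUnitalRing R] (ψ : R ≃+* (Fin m → ZMod 2))
    {u : R} (hu : ∀ x, u * x = x) : ψ u = 1 := by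
  have h := congrArg ψ (hu (ψ.symm 1))
  rwa [map_mul, ψ.apply_symm_apply, mul_one] at h

theorem mu_eq_one_of_isomorphic_St (hK : K.Isomorphic (St m)) (hm : 0 < m)
    {u : K.carrier} (hu : ∀ x, u * x = x) : K.mu u = 1 := by
  obtain ⟨ψ, hψ⟩ := isomorphic_St_iff.mp hK
  simp [← hψ, map_eq_one_of_forall_mul_eq ψ hu, ZMod.val_one, hm.ne']

theorem isomorphic_St_of_scalarEquivalent (hK : K.ScalarEquivalent (St m)) (hm : 0 < m)
    {u : K.carrier} (hu : ∀ x, u * x = x) (hμu : K.mu u = 1) : K.Isomorphic (St m) := by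
  obtain ⟨α, -, ψ, hψ⟩ := scalarEquivalent_St_iff.mp hK
  have hα : α = 1 := by
    simpa [map_eq_one_of_forall_mul_eq ψ hu, ZMod.val_one, hm.ne', hμu] using (hψ u).symm
  exact isomorphic_St_iff.mpr ⟨ψ, fun a => by rw [hψ, hα, one_mul]⟩


theorem exists_standard_atoms_cover (hls : H.LocallyStandard) {e : H.carrier}
    (he : ∀ x, e * x = x) (hμe : H.mu e = 1) (t : Finset H.carrier) :
    ∃ (m : ℕ) (g : Fin m → H.carrier), 0 < m ∧ Pairwise (fun a b => g a * g b = 0) ∧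
      (∀ l, H.mu (g l) = 1 / m) ∧ ∀ x ∈ t, ∃ A : Finset (Fin m), x = ∑ l ∈ A, g l := by
  classical
  obtain ⟨R, m, hm, hsub, hR⟩ := hls (insert e t)
  have heR : e ∈ R := hsub (Finset.mem_insert_self e t)
  obtain ⟨g, hg, -, hμg, hspan⟩ := exists_atoms_of_isomorphic_St
    (isomorphic_St_of_scalarEquivalent hR hm (u := ⟨e, heR⟩) (fun x => Subtype.ext (he x.1)) hμe)
  refine ⟨m, fun l => (g l).1, hm, fun a b hab => congrArg Subtype.val (hg hab), hμg,
    fun x hx => ?_⟩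
  obtain ⟨A, hA⟩ := hspan ⟨x, hsub (Finset.mem_insert_of_mem hx)⟩
  exact ⟨A, (congrArg Subtype.val hA).trans (AddSubmonoidClass.coe_finsetSum (S := R) _ _)⟩

/-- A grid of `n · |J|` pairwise orthogonal atoms of equal measure whose `i`-th row adds up to
`e i`. Its columns span a candidate tensor complement of the algebra generated by the `e i`. -/
structure Level (H : MeasureAlgebra) {n : ℕ} (e : Fin n → H.carrier) : Type 1 where
  J : Type
  [fintype : Fintype J]
  [nonempty : Nonempty J]
  b : Fin n × J → H.carrier
  pairwise_mul : Pairwise fun x y => b x * b y = 0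
  mu_b : ∀ x, H.mu (b x) = 1 / (n * Fintype.card J)
  sum_b : ∀ i, ∑ j, b (i, j) = e i

attribute [instance] Level.fintype Level.nonempty

namespace Level

variable {n : ℕ} {e : Fin n → H.carrier} (L : Level H e)

def base (he : Pairwise fun i j => e i * e j = 0) (hμe : ∀ i, H.mu (e i) = 1 / n) :
    Level H e where
  J := Unit
  b p := e p.1
  pairwise_mul _ _ hpq := he fun h => hpq (Prod.ext h rfl)
  mu_b p := by simpa using hμe p.1
  sum_b i := by simp

def col (j : L.J) : H.carrier := ∑ i, L.b (i, j)

def alg : NonUnitalSubring H.carrier := NonUnitalSubring.closure (Set.range L.b)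

def colAlg : NonUnitalSubring H.carrier := NonUnitalSubring.closure (Set.range L.col)

theorem sum_e_eq (I : Finset (Fin n)) : ∑ i ∈ I, e i = ∑ p ∈ I ×ˢ Finset.univ, L.b p := by
  simp only [Finset.sum_product, L.sum_b]

theorem sum_col_eq (K : Finset L.J) : ∑ j ∈ K, L.col j = ∑ p ∈ Finset.univ ×ˢ K, L.b p := by
  rw [Finset.sum_product_right]
  rfl

theorem sum_e_mem_colAlg : ∑ i, e i ∈ L.colAlg := by
  have hsum : ∑ j, L.col j = ∑ i, e i := by simp only [col, L.sum_b, Finset.sum_comm (γ := L.J)]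
  rw [← hsum]
  exact sum_mem fun j _ => NonUnitalSubring.subset_closure ⟨j, rfl⟩

theorem sum_e_mul_sum_col (I : Finset (Fin n)) (K : Finset L.J) :
    (∑ i ∈ I, e i) * ∑ j ∈ K, L.col j = ∑ p ∈ I ×ˢ K, L.b p := by
  classical
  rw [sum_e_eq, sum_col_eq, sum_mul_sum_of_pairwise L.pairwise_mul,
    Finset.product_inter_product, Finset.inter_univ, Finset.univ_inter]

theorem e_mul_col (i : Fin n) (j : L.J) : e i * L.col j = L.b (i, j) := by
  simpa using L.sum_e_mul_sum_col {i} {j}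

theorem col_pairwise : Pairwise fun j j' => L.col j * L.col j' = 0 := by
  classical
  intro j j' h
  calc L.col j * L.col j'
      = (∑ p ∈ Finset.univ ×ˢ {j}, L.b p) * ∑ p ∈ Finset.univ ×ˢ {j'}, L.b p := by
        rw [← L.sum_col_eq, ← L.sum_col_eq, Finset.sum_singleton, Finset.sum_singleton]
    _ = 0 := by
        rw [sum_mul_sum_of_pairwise L.pairwise_mul, Finset.product_inter_product]
        simp [h]

theorem mu_sum_b (B : Finset (Fin n × L.J)) :
    H.mu (∑ p ∈ B, L.b p) = B.card / (n * Fintype.card L.J) := by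
  rw [mu_sum_of_pairwise_of_forall_eq L.pairwise_mul L.mu_b, mul_one_div]

theorem mu_sum_e_mul_sum_col (I : Finset (Fin n)) (K : Finset L.J) :
    H.mu ((∑ i ∈ I, e i) * ∑ j ∈ K, L.col j) =
      H.mu (∑ i ∈ I, e i) * H.mu (∑ j ∈ K, L.col j) := by
  rw [L.sum_e_mul_sum_col, L.sum_e_eq, L.sum_col_eq, L.mu_sum_b, L.mu_sum_b, L.mu_sum_b]
  simp only [Finset.card_product, Finset.card_univ, Fintype.card_fin, Nat.cast_mul]
  rcases Nat.eq_zero_or_pos n with rfl | hn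
  · simp
  · have : (0 : ℝ) < Fintype.card L.J := by exact_mod_cast Fintype.card_pos
    field_simp

theorem exists_equiv_of_forall_eq_sum (hn : 0 < n) {m : ℕ} (hm : 0 < m) {g : Fin m → H.carrier}
    (hg : Pairwise fun a b => g a * g b = 0) (hμg : ∀ l, H.mu (g l) = 1 / m)
    (hbg : ∀ x, ∃ A : Finset (Fin m), L.b x = ∑ l ∈ A, g l) :
    ∃ (s : ℕ) (E : (Fin n × L.J) × Fin s ≃ Fin m), s * (n * Fintype.card L.J) = m ∧
      ∀ x, L.b x = ∑ t, g (E (x, t)) := by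
  classical
  choose A hA using hbg
  set q := n * Fintype.card L.J
  have hq : 0 < q := Nat.mul_pos hn Fintype.card_pos
  have hqR : (0 : ℝ) < q := by exact_mod_cast hq
  have hmR : (0 : ℝ) < m := by exact_mod_cast hm
  have hμA : ∀ B : Finset (Fin m), H.mu (∑ l ∈ B, g l) = B.card / m := fun B => by
    rw [mu_sum_of_pairwise_of_forall_eq hg hμg, mul_one_div]
  have hcardA : ∀ x, (A x).card * q = m := by
    intro x
    have h := L.mu_b x
    rw [hA x, hμA, div_eq_div_iff hmR.ne' (by exact_mod_cast hqR.ne'), one_mul] at h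
    exact_mod_cast h
  have hdisj : Pairwise fun x y => Disjoint (A x) (A y) := by
    intro x y hxy
    have h := congrArg H.mu (L.pairwise_mul hxy)
    rw [hA x, hA y, sum_mul_sum_of_pairwise hg, hμA, mu_zero, div_eq_zero_iff] at h
    rw [Finset.disjoint_iff_inter_eq_empty, ← Finset.card_eq_zero]
    exact_mod_cast h.resolve_right hmR.ne'
  set s := m / q
  have hs : ∀ x, (A x).card = s := fun x =>
    (Nat.div_eq_of_eq_mul_left hq (hcardA x).symm).symm
  have hsq : s * q = m := hs (⟨0, hn⟩, Classical.arbitrary _) ▸ hcardA _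
  obtain ⟨E, hE⟩ := exists_equiv_prod_fin_of_pairwise_disjoint hdisj hs
    (by rw [Fintype.card_prod, Fintype.card_fin, Fintype.card_fin, ← hsq, mul_comm])
  refine ⟨s, E, hsq, fun x => ?_⟩
  rw [hA x, ← hE x, Finset.sum_image fun _ _ _ _ h => Prod.mk_right_injective x (E.injective h)]

theorem exists_refinement (hn : 0 < n) {m : ℕ} (hm : 0 < m) {g : Fin m → H.carrier}
    (hg : Pairwise fun a b => g a * g b = 0) (hμg : ∀ l, H.mu (g l) = 1 / m)
    (hbg : ∀ x, ∃ A : Finset (Fin m), L.b x = ∑ l ∈ A, g l) :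
    ∃ L' : Level H e, L.colAlg ≤ L'.colAlg ∧
      NonUnitalSubring.closure (Set.range g) ≤ L'.alg := by
  obtain ⟨s, E, hsq, hb⟩ := L.exists_equiv_of_forall_eq_sum hn hm hg hμg hbg
  have : Nonempty (Fin s) := ⟨⟨0, Nat.pos_of_ne_zero fun h0 => by rw [h0, zero_mul] at hsq; omega⟩⟩
  let E' : Fin n × (L.J × Fin s) ≃ Fin m := (Equiv.prodAssoc _ _ _).symm.trans E
  let L' : Level H e :=
    { J := L.J × Fin s
      b := g ∘ E'
      pairwise_mul := hg.comp_of_injective E'.injective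
      mu_b := fun p => by
        rw [Function.comp_apply, hμg, Fintype.card_prod, Fintype.card_fin, ← hsq]
        push_cast
        ring_nf
      sum_b := fun i => by
        rw [← L.sum_b i, Fintype.sum_prod_type]
        exact Finset.sum_congr rfl fun j _ => (hb (i, j)).symm }
  refine ⟨L', NonUnitalSubring.closure_le.mpr ?_, NonUnitalSubring.closure_le.mpr ?_⟩
  · rintro _ ⟨j, rfl⟩
    have hcol : L.col j = ∑ t, L'.col (j, t) := by
      simp only [col, hb]
      exact Finset.sum_comm
    rw [SetLike.mem_coe, hcol]
    exact sum_mem fun t _ => NonUnitalSubring.subset_closure ⟨(j, t), rfl⟩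
  · rintro _ ⟨l, rfl⟩
    exact NonUnitalSubring.subset_closure ⟨E'.symm l, by simp [L']⟩

theorem exists_le_colAlg_and_mem_alg (hls : H.LocallyStandard) {u : H.carrier}
    (hu : ∀ x, u * x = x) (hμu : H.mu u = 1) (hn : 0 < n) (L : Level H e) (h : H.carrier) :
    ∃ L' : Level H e, L.colAlg ≤ L'.colAlg ∧ h ∈ L'.alg := by
  classical
  obtain ⟨m, g, hm, hg, hμg, hcover⟩ :=
    exists_standard_atoms_cover hls hu hμu (insert h (Finset.univ.image L.b))
  obtain ⟨L', hcol, hg'⟩ := L.exists_refinement hn hm hg hμg fun x =>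
    hcover _ (Finset.mem_insert_of_mem (Finset.mem_image_of_mem _ (Finset.mem_univ x)))
  obtain ⟨A, rfl⟩ := hcover h (Finset.mem_insert_self _ _)
  exact ⟨L', hcol, hg' ((mem_closure_range_iff hg).mpr ⟨A, rfl⟩)⟩

end Level

variable {S T : NonUnitalSubring H.carrier}

@[simp]
theorem mulTensor_tmul (s : S) (t : T) : H.mulTensor S T (s ⊗ₜ t) = s * t := rfl

section Atoms

variable {ι : Type*} [Fintype ι] {a : ι → S} (ha : Pairwise fun i j => a i * a j = 0)
include ha

theorem mu_sum_mul (hmul : ∀ s ∈ S, ∀ t ∈ T, H.mu (s * t) = H.mu s * H.mu t) (t : ι → T) :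
    H.mu (∑ i, (a i : H.carrier) * t i) = ∑ i, H.mu (a i) * H.mu (t i) := by
  rw [mu_sum_of_pairwise (g := fun i => (a i : H.carrier) * (t i : H.carrier)) fun i j hij => by
    simp only [mul_mul_mul_comm (a i : H.carrier), ← MulMemClass.coe_mul, ha hij,
      ZeroMemClass.coe_zero, zero_mul]]
  exact Finset.sum_congr rfl fun i _ => hmul _ (a i).2 _ (t i).2

theorem mulTensor_injective (hmul : ∀ s ∈ S, ∀ t ∈ T, H.mu (s * t) = H.mu s * H.mu t)
    (ha0 : ∀ i, a i ≠ 0) (hspan : Submodule.span ℤ (Set.range a) = ⊤) :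
    Function.Injective (H.mulTensor S T) := by
  refine (injective_iff_map_eq_zero _).mpr fun u hu => ?_
  obtain ⟨t, rfl⟩ := exists_eq_sum_tmul_of_span_eq_top hspan u
  have ht : ∀ i, t i = 0 := by
    have h := congrArg H.mu hu
    rw [map_sum, mu_zero] at h
    simp only [mulTensor_tmul] at h
    rw [mu_sum_mul ha hmul, Finset.sum_eq_zero_iff_of_nonneg fun i _ =>
      mul_nonneg (H.mu_nonneg _) (H.mu_nonneg _)] at h
    intro i
    rcases mul_eq_zero.mp (h i (Finset.mem_univ i)) with h0 | h0
    · exact absurd (ZeroMemClass.coe_eq_zero.mp ((H.mu_eq_zero_iff _).mp h0)) (ha0 i)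
    · exact ZeroMemClass.coe_eq_zero.mp ((H.mu_eq_zero_iff _).mp h0)
  simp [ht]

theorem exists_ringEquiv_extension (hST : H.IsTensorFactorization S T)
    (hspan : Submodule.span ℤ (Set.range a) = ⊤) {u : H.carrier} (huT : u ∈ T)
    (hu : ∀ x, u * x = x) (φ : S ≃+* S) (hφ : ∀ x : S, H.mu (φ x) = H.mu x) :
    ∃ Φ : H.carrier ≃+* H.carrier, (∀ x, H.mu (Φ x) = H.mu x) ∧ ∀ s : S, Φ s = φ s := by
  let m := LinearEquiv.ofBijective (H.mulTensor S T) hST.2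
  let Φ : H.carrier ≃ₗ[ℤ] H.carrier := m.symm ≪≫ₗ
    TensorProduct.congr φ.toAddEquiv.toIntLinearEquiv (LinearEquiv.refl ℤ T) ≪≫ₗ m
  have hm : ∀ (s : S) (t : T), m (s ⊗ₜ t) = s * t := fun _ _ => rfl
  have hΦ : ∀ (s : S) (t : T), Φ (s * t) = φ s * t := fun s t =>
    calc Φ (s * t) = m (TensorProduct.congr φ.toAddEquiv.toIntLinearEquiv
          (LinearEquiv.refl ℤ T) (m.symm (m (s ⊗ₜ t)))) := rfl
      _ = φ s * t := by rw [m.symm_apply_apply, TensorProduct.congr_tmul]; rfl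
  have hΦmul : ∀ x y, Φ (x * y) = Φ x * Φ y := by
    intro x y
    obtain ⟨v, rfl⟩ := m.surjective x
    obtain ⟨w, rfl⟩ := m.surjective y
    induction v using TensorProduct.induction_on with
    | zero => simp
    | add v v' hv hv' => simp only [map_add, add_mul, hv, hv']
    | tmul s t =>
      induction w using TensorProduct.induction_on with
      | zero => simp
      | add w w' hw hw' => simp only [map_add, mul_add, hw, hw']
      | tmul s' t' =>
        change Φ (s * t * (s' * t')) = Φ (s * t) * Φ (s' * t')
        rw [hΦ, hΦ, mul_mul_mul_comm, ← MulMemClass.coe_mul, ← MulMemClass.coe_mul, hΦ,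
          map_mul, MulMemClass.coe_mul, MulMemClass.coe_mul, mul_mul_mul_comm]
  refine ⟨{ Φ.toEquiv with map_mul' := hΦmul, map_add' := Φ.map_add }, fun x => ?_, fun s => ?_⟩
  · obtain ⟨v, rfl⟩ := m.surjective x
    obtain ⟨t, rfl⟩ := exists_eq_sum_tmul_of_span_eq_top hspan v
    have hφa : Pairwise fun i j => φ (a i) * φ (a j) = 0 := fun i j hij => by
      change φ (a i) * φ (a j) = 0
      rw [← map_mul, ha hij, map_zero]
    change H.mu (Φ (m _)) = H.mu (m _)
    simp only [map_sum, hm, hΦ]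
    rw [mu_sum_mul hφa hST.1, mu_sum_mul ha hST.1]
    simp only [hφ]
  · change Φ s = φ s
    have hsu : (s : H.carrier) = s * (⟨u, huT⟩ : T) := by rw [mul_comm]; exact (hu s).symm
    rw [hsu, hΦ, mul_comm]
    exact hu _

end Atoms

theorem isTensorFactorization_iSup_colAlg {n : ℕ}
    {a : Fin n → S} (ha : Pairwise fun i j => a i * a j = 0) (ha0 : ∀ i, a i ≠ 0)
    (hspan : ∀ s, ∃ A : Finset (Fin n), s = ∑ i ∈ A, a i)
    {lvl : ℕ → Level H fun i => (a i : H.carrier)} (hmono : Monotone fun k => (lvl k).colAlg)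
    (hcover : ∀ h, ∃ k, h ∈ (lvl k).alg) :
    H.IsTensorFactorization S (⨆ k, (lvl k).colAlg) := by
  have hmem : ∀ {t}, t ∈ ⨆ k, (lvl k).colAlg ↔ ∃ k, t ∈ (lvl k).colAlg :=
    NonUnitalSubring.mem_iSup_of_directed hmono.directed_le
  have hmul : ∀ s ∈ S, ∀ t ∈ ⨆ k, (lvl k).colAlg, H.mu (s * t) = H.mu s * H.mu t := by
    intro s hs t ht
    obtain ⟨A, hA⟩ := hspan ⟨s, hs⟩
    obtain ⟨k, hk⟩ := hmem.mp ht
    obtain ⟨K, rfl⟩ := (mem_closure_range_iff (lvl k).col_pairwise).mp hk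
    obtain rfl : s = ∑ i ∈ A, (a i : H.carrier) :=
      (congrArg Subtype.val hA).trans (AddSubmonoidClass.coe_finsetSum _ _)
    exact (lvl k).mu_sum_e_mul_sum_col A K
  refine ⟨hmul, mulTensor_injective ha hmul ha0 (span_range_eq_top_of_forall_exists_sum hspan),
    fun h => ?_⟩
  obtain ⟨k, hk⟩ := hcover h
  obtain ⟨B, rfl⟩ := (mem_closure_range_iff (lvl k).pairwise_mul).mp hk
  have hcol : ∀ j, (lvl k).col j ∈ ⨆ k, (lvl k).colAlg := fun j =>
    hmem.mpr ⟨k, NonUnitalSubring.subset_closure ⟨j, rfl⟩⟩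
  refine ⟨∑ p ∈ B, a p.1 ⊗ₜ ⟨(lvl k).col p.2, hcol p.2⟩, ?_⟩
  simp only [map_sum, mulTensor_tmul]
  exact Finset.sum_congr rfl fun p _ => (lvl k).e_mul_col p.1 p.2

end MeasureAlgebra

open MeasureAlgebra

theorem standard_subalgebra_automorphism_extends_and_tensor_factor_general
    (H : MeasureAlgebra) (hc : Countable H.carrier)
    (hls : H.LocallyStandard) (n : ℕ) (hn : 0 < n)
    (S : NonUnitalSubring H.carrier) (e : H.carrier)
    (he : ∀ x, e * x = x) (heS : e ∈ S)
    (hiso : (H.restrict S).Isomorphic (MeasureAlgebra.St n)) :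
    (∀ φ : ↥S ≃+* ↥S, (∀ x : ↥S, H.mu ↑(φ x) = H.mu ↑x) →
      ∃ Φ : H.carrier ≃+* H.carrier, (∀ a, H.mu (Φ a) = H.mu a) ∧
        ∀ x : ↥S, Φ ↑x = ↑(φ x)) ∧
    (∃ T : NonUnitalSubring H.carrier, H.IsTensorFactorization S T) := by
  obtain ⟨a, ha, ha0, hμa, hspan⟩ : ∃ a : Fin n → S, Pairwise (fun i j => a i * a j = 0) ∧
      (∀ i, a i ≠ 0) ∧ (∀ i, H.mu (a i) = 1 / n) ∧ ∀ s, ∃ A : Finset (Fin n), s = ∑ i ∈ A, a i :=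
    exists_atoms_of_isomorphic_St hiso
  have heS' : ∀ x : S, ⟨e, heS⟩ * x = x := fun x => Subtype.ext (he x)
  have hμe : H.mu e = 1 := mu_eq_one_of_isomorphic_St hiso hn heS'
  have hsum : e = ∑ i, (a i : H.carrier) :=
    (congrArg Subtype.val (eq_sum_of_forall_mul_eq (H := H.restrict S) ha ha0 hspan heS')).trans
      (AddSubmonoidClass.coe_finsetSum _ _)
  obtain ⟨lvl, hmono, hcover⟩ := exists_seq_monotone_forall_exists Level.colAlg
    (fun L h => h ∈ L.alg) (Level.base (fun i j hij => congrArg Subtype.val (ha hij)) hμa)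
    (Level.exists_le_colAlg_and_mem_alg hls he hμe hn)
  have hT := isTensorFactorization_iSup_colAlg ha ha0 hspan hmono hcover
  have heT : e ∈ ⨆ k, (lvl k).colAlg :=
    hsum ▸ le_iSup (fun k => (lvl k).colAlg) 0 (lvl 0).sum_e_mem_colAlg
  exact ⟨fun φ hφ => exists_ringEquiv_extension ha hT
    (span_range_eq_top_of_forall_exists_sum hspan) heT he φ hφ, _, hT⟩

/-- **Lemma 7(1).** Let `(H, μ)` be a countable unital locally standard measure algebra
and `Stₙ ≅ S ⊆ H` a standard measure subalgebra containing the identity of `H`. Then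
every automorphism of `S` extends to an automorphism of `H`; moreover, `S` is a tensor
factor of `H`: there is a measure subalgebra `T ⊆ H` with `S ⊗ T = H`. -/
theorem standard_subalgebra_automorphism_extends_and_tensor_factor
    (H : MeasureAlgebra) (hc : Countable H.carrier) (hu : H.Unital)
    (hls : H.LocallyStandard) (n : ℕ) (hn : 0 < n)
    (S : NonUnitalSubring H.carrier) (e : H.carrier)
    (he : ∀ x, e * x = x) (heS : e ∈ S)
    (hiso : (H.restrict S).Isomorphic (MeasureAlgebra.St n)) :
    (∀ φ : ↥S ≃+* ↥S, (∀ x : ↥S, H.mu ↑(φ x) = H.mu ↑x) →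
      ∃ Φ : H.carrier ≃+* H.carrier, (∀ a, H.mu (Φ a) = H.mu a) ∧
        ∀ x : ↥S, Φ ↑x = ↑(φ x)) ∧
    (∃ T : NonUnitalSubring H.carrier, H.IsTensorFactorization S T) :=
  standard_subalgebra_automorphism_extends_and_tensor_factor_general H hc hls n hn S e he heS hiso
end
end

section
/- Let (H,μ) be a unital locally standard measure algebra and let e ∈ H be a nonzero element. Then st(H_e) = μ(e)·st(H). In particular, if (Stₙ, μₙ) is a standard measure algebra and 0 ≠ e ∈ Stₙ, then the measure algebra (Stₙ)_e is isomorphic to the standard measure algebra St_{μₙ(e)·n}. -/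
open scoped BigOperators

noncomputable section

/-!
Local standardness puts `e` and the identity into a subalgebra isomorphic to `St_{n₀}` (the
identity has measure `1`, so the scaling factor is `1`); hence `n₀ ∈ D(H)`, `μ(e) = a / n₀`,
and `a ∈ D(H_e)` because the corner of `Stₙ` at an element with `k` ones is `St_k`.
It remains to compare the two least common multiples prime by prime. For `m ∈ D(H_e)`, a
coordinate atom `u` of the copy of `St_m` has `μ(u) = μ(e) / m`; a standard subalgebra
`St_N ∋ u` with `N ∈ D(H)` gives `n₀ m ∣ a N`. For `k ∈ D(H)`, a coordinate atom `u` of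
`St_k` has `μ(u) = 1 / k`; a standard subalgebra `St_N ∋ e, u` gives `k ∣ N` and
`c = μ(e) N ∈ D(H_e)`, whence `a k ∣ n₀ c`.
-/

namespace SteinitzNumber

def lcm (A : Set ℕ) : SteinitzNumber := fun p => ⨆ n ∈ A, (n.factorization p : ℕ∞)

theorem natDvd_lcm {A : Set ℕ} {n : ℕ} (hn : n ∈ A) (hn0 : 0 < n) : NatDvd n (lcm A) :=
  ⟨hn0, fun _ => le_iSup₂_of_le n hn le_rfl⟩

theorem ofNat_mul_lcm_apply_le {A B : Set ℕ} {a b : ℕ} (hA : A.Nonempty) (ha : a ≠ 0)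
    (hB : 0 ∉ B) (h : ∀ m ∈ A, ∃ N ∈ B, b * m ∣ a * N) (p : Nat.Primes) :
    (ofNat b * lcm A) p ≤ (ofNat a * lcm B) p := by
  change (b.factorization p : ℕ∞) + ⨆ m ∈ A, (m.factorization p : ℕ∞)
    ≤ (a.factorization p : ℕ∞) + ⨆ N ∈ B, (N.factorization p : ℕ∞)
  rw [ENat.add_biSup hA]
  refine iSup₂_le fun m hm => ?_
  obtain ⟨N, hN, hdvd⟩ := h m hm
  have hN0 : N ≠ 0 := fun h => hB (h ▸ hN)
  have haN : a * N ≠ 0 := mul_ne_zero ha hN0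
  have hbm : b * m ≠ 0 := ne_zero_of_dvd_ne_zero haN hdvd
  have hle := (Nat.factorization_le_iff_dvd hbm haN).2 hdvd p
  rw [Nat.factorization_mul (left_ne_zero_of_mul hbm) (right_ne_zero_of_mul hbm),
    Nat.factorization_mul ha hN0] at hle
  calc (b.factorization p : ℕ∞) + m.factorization p
      ≤ a.factorization p + N.factorization p := mod_cast hle
    _ ≤ _ := by gcongr; exact le_iSup₂_of_le N hN le_rfl

theorem ofNat_mul_lcm_eq {A B : Set ℕ} {a b : ℕ} (hA : A.Nonempty) (ha : a ≠ 0) (hb : b ≠ 0)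
    (hA0 : 0 ∉ A) (hB0 : 0 ∉ B) (hAB : ∀ m ∈ A, ∃ N ∈ B, b * m ∣ a * N)
    (hBA : ∀ k ∈ B, ∃ c ∈ A, a * k ∣ b * c) :
    ofNat b * lcm A = ofNat a * lcm B := by
  obtain ⟨m, hm⟩ := hA
  obtain ⟨N, hN, -⟩ := hAB m hm
  funext p
  exact le_antisymm (ofNat_mul_lcm_apply_le ⟨m, hm⟩ ha hB0 hAB p)
    (ofNat_mul_lcm_apply_le ⟨N, hN⟩ hb hA0 hBA p)

end SteinitzNumber

namespace MeasureAlgebra.St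

variable {n : ℕ}

def support (x : Fin n → ZMod 2) : Finset (Fin n) := {i | x i ≠ 0}

theorem mu_apply (x : Fin n → ZMod 2) : (St n).mu x = (∑ i, ((x i).val : ℝ)) / n := rfl

theorem mu_eq_card_div (x : Fin n → ZMod 2) : (St n).mu x = (support x).card / n := by
  have hval : ∀ u : ZMod 2, u.val = if u ≠ 0 then 1 else 0 := by decide
  rw [mu_apply, support, Finset.card_filter]
  push_cast
  simp_rw [hval]
  push_cast
  rfl

theorem card_support_eq_mu_mul (x : Fin n → ZMod 2) :
    ((support x).card : ℝ) = (St n).mu x * n := by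
  rw [mu_eq_card_div]
  rcases eq_or_ne n 0 with rfl | hn
  · simp [Finset.eq_empty_of_isEmpty]
  · field_simp

theorem mu_one (hn : 0 < n) : (St n).mu (1 : Fin n → ZMod 2) = 1 := by
  have : support (1 : Fin n → ZMod 2) = Finset.univ := by
    ext i; simp [support]
  rw [mu_eq_card_div, this, Finset.card_univ, Fintype.card_fin]
  exact div_self (by positivity)

theorem mu_single (i : Fin n) : (St n).mu (Pi.single i 1 : Fin n → ZMod 2) = (n : ℝ)⁻¹ := by
  have : support (Pi.single i 1 : Fin n → ZMod 2) = {i} := by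
    ext j; simp [support, Pi.single_apply]
  rw [mu_eq_card_div, this, Finset.card_singleton, Nat.cast_one, one_div]

theorem mul_eq_right_iff {x y : Fin n → ZMod 2} : x * y = y ↔ ∀ i ∉ support x, y i = 0 := by
  have h : ∀ a b : ZMod 2, a * b = b ↔ (a = 0 → b = 0) := by decide
  simp only [funext_iff, Pi.mul_apply, support, Finset.mem_filter, Finset.mem_univ, true_and,
    not_not]
  exact forall_congr' fun i => h (x i) (y i)

theorem sum_comp_equivFin_symm_support {x y : Fin n → ZMod 2} (hy : x * y = y) (f : ZMod 2 → ℝ)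
    (hf : f 0 = 0) : ∑ j, f (y ((support x).equivFin.symm j)) = ∑ i, f (y i) := by
  rw [Equiv.sum_comp (support x).equivFin.symm (fun i => f (y i.1)),
    Finset.sum_coe_sort (support x) (fun i => f (y i))]
  exact Finset.sum_subset (Finset.subset_univ _) fun i _ hi => by
    rw [mul_eq_right_iff.1 hy i hi, hf]

theorem corner_isomorphic (x : Fin n → ZMod 2) :
    ((St n).corner x).Isomorphic (St (support x).card) := by
  let ι := (support x).equivFin
  refine ⟨{
    toFun := fun y j => y.1 (ι.symm j)
    invFun := fun z => ⟨fun i => if h : i ∈ support x then z (ι ⟨i, h⟩) else 0,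
      mul_eq_right_iff.2 fun i hi => dif_neg hi⟩
    left_inv := fun y => Subtype.ext <| funext fun i => by
      by_cases hi : i ∈ support x
      · simp [hi]
      · exact (dif_neg hi).trans (mul_eq_right_iff.1 y.2 i hi).symm
    right_inv := fun z => funext fun j => by simp
    map_mul' := fun _ _ => rfl
    map_add' := fun _ _ => rfl }, fun y => ?_⟩
  change (∑ j, ((y.1 (ι.symm j)).val : ℝ)) / (support x).card
    = (∑ i, ((y.1 i).val : ℝ)) / n / (St n).mu x
  rw [sum_comp_equivFin_symm_support y.2 (fun u => (u.val : ℝ)) (by simp), mu_eq_card_div x]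
  rcases eq_or_ne (support x).card 0 with hx | hx
  · simp [hx]
  have hn : (n : ℝ) ≠ 0 := by
    have := (support x).card_le_univ
    rw [Fintype.card_fin] at this
    exact Nat.cast_ne_zero.2 (by omega)
  field_simp

theorem corner_isomorphic_of_natCast_eq (x : Fin n → ZMod 2) {m : ℕ}
    (hm : (m : ℝ) = (St n).mu x * n) : ((St n).corner x).Isomorphic (St m) := by
  have hcard : (support x).card = m := by
    exact_mod_cast (card_support_eq_mu_mul x).trans hm.symm
  exact hcard ▸ corner_isomorphic x

end MeasureAlgebra.St

namespace MeasureAlgebra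

variable {H : MeasureAlgebra}

theorem mu_pos {x : H.carrier} (hx : x ≠ 0) : 0 < H.mu x :=
  (H.mu_nonneg x).lt_of_ne' (mt (H.mu_eq_zero_iff x).1 hx)

theorem Isomorphic.trans {H₁ H₂ H₃ : MeasureAlgebra} (h₁₂ : H₁.Isomorphic H₂)
    (h₂₃ : H₂.Isomorphic H₃) : H₁.Isomorphic H₃ := by
  obtain ⟨φ, hφ⟩ := h₁₂
  obtain ⟨ψ, hψ⟩ := h₂₃
  exact ⟨φ.trans ψ, fun a => (hψ (φ a)).trans (hφ a)⟩

theorem isomorphic_corner_map {H₁ H₂ : MeasureAlgebra} (φ : H₁.carrier ≃+* H₂.carrier)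
    (hφ : ∀ a, H₂.mu (φ a) = H₁.mu a) (h : H₁.carrier) :
    (H₁.corner h).Isomorphic (H₂.corner (φ h)) := by
  refine ⟨{
    toFun := fun y => ⟨φ y.1, show φ h * φ y.1 = φ y.1 by rw [← map_mul]; exact congrArg φ y.2⟩
    invFun := fun z => ⟨φ.symm z.1, show h * φ.symm z.1 = φ.symm z.1 by
      simpa using congrArg φ.symm z.2⟩
    left_inv := fun y => Subtype.ext (φ.symm_apply_apply y.1)
    right_inv := fun z => Subtype.ext (φ.apply_symm_apply z.1)
    map_mul' := fun y y' => Subtype.ext (map_mul φ y.1 y'.1)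
    map_add' := fun y y' => Subtype.ext (map_add φ y.1 y'.1) }, fun a => ?_⟩
  change H₂.mu (φ a.1) / H₂.mu (φ h) = H₁.mu a.1 / H₁.mu h
  rw [hφ, hφ]

theorem Isomorphic.exists_natCast_eq_mu_mul {N : ℕ} (hiso : H.Isomorphic (St N))
    (x : H.carrier) : ∃ k : ℕ, (k : ℝ) = H.mu x * N := by
  obtain ⟨φ, hφ⟩ := hiso
  exact ⟨_, (St.card_support_eq_mu_mul (φ x)).trans (by rw [hφ])⟩

theorem zero_notMem_D {x : H.carrier} (hx : x ≠ 0) : 0 ∉ H.D := by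
  rintro ⟨S, ⟨u, huS, hu⟩, φ, -⟩
  have hu0 : (⟨u, huS⟩ : S) = 0 := φ.injective (funext fun i => i.elim0)
  exact hx (by rw [← hu x, show u = 0 from congrArg Subtype.val hu0, zero_mul])

theorem Unital.zero_notMem_D (hu : H.Unital) : 0 ∉ H.D := by
  obtain ⟨one, -, hmu1⟩ := hu
  refine MeasureAlgebra.zero_notMem_D (x := one) fun h => ?_
  rw [h, (H.mu_eq_zero_iff 0).2 rfl] at hmu1
  exact zero_ne_one hmu1

theorem zero_notMem_D_corner {e : H.carrier} (he : e ≠ 0) : 0 ∉ (H.corner e).D :=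
  zero_notMem_D (x := (⟨e, H.idem e⟩ : (H.corner e).carrier)) fun h => he (congrArg Subtype.val h)

theorem exists_mu_eq_inv_of_mem_D {k : ℕ} (hk : k ∈ H.D) : ∃ u : H.carrier, H.mu u = (k : ℝ)⁻¹ := by
  obtain ⟨S, -, φ, hφ⟩ := hk
  rcases Nat.eq_zero_or_pos k with rfl | hk
  · exact ⟨0, by simpa using (H.mu_eq_zero_iff 0).2 rfl⟩
  · obtain ⟨z, hz⟩ : ∃ z : (St k).carrier, (St k).mu z = (k : ℝ)⁻¹ :=
      ⟨Pi.single ⟨0, hk⟩ 1, St.mu_single _⟩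
    exact ⟨(φ.symm z).1, (hφ _).symm.trans (by rw [φ.apply_symm_apply, hz])⟩

theorem Unital.exists_mem_D_isomorphic (hu : H.Unital) (hls : H.LocallyStandard)
    (t : Finset H.carrier) :
    ∃ N ∈ H.D, 0 < N ∧ ∃ S : NonUnitalSubring H.carrier,
      (↑t : Set H.carrier) ⊆ S ∧ (H.restrict S).Isomorphic (St N) := by
  classical
  obtain ⟨one, hone, hmu1⟩ := hu
  obtain ⟨S, N, hN, hsub, α, -, φ, hφ⟩ := hls (insert one t)
  have honeS : one ∈ S := hsub (Finset.mem_insert_self one t)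
  let o : (H.restrict S).carrier := ⟨one, honeS⟩
  have hleft (z : (St N).carrier) : φ o * z = z := by
    have := congrArg φ (Subtype.ext (hone (φ.symm z).1) : o * φ.symm z = φ.symm z)
    rwa [map_mul, φ.apply_symm_apply] at this
  have hφone : φ o = (1 : Fin N → ZMod 2) :=
    funext fun i => (mul_one (φ o i)).symm.trans (congrFun (hleft fun _ => 1) i)
  have hα : α = 1 := by
    have := hφ o
    rw [hφone, St.mu_one hN] at this
    change 1 = α * H.mu one at this
    rw [hmu1, mul_one] at this
    exact this.symm
  have hiso : (H.restrict S).Isomorphic (St N) := ⟨φ, fun a => by rw [hφ, hα, one_mul]⟩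
  exact ⟨N, ⟨S, ⟨one, honeS, hone⟩, hiso⟩, hN, S,
    fun x hx => hsub (Finset.mem_insert_of_mem hx), hiso⟩

theorem mem_D_corner {S : NonUnitalSubring H.carrier} {N : ℕ}
    (hiso : (H.restrict S).Isomorphic (St N)) {e : H.carrier} (heS : e ∈ S) {c : ℕ}
    (hc : (c : ℝ) = H.mu e * N) : c ∈ (H.corner e).D := by
  obtain ⟨φ, hφ⟩ := hiso
  let T := S.comap (NonUnitalSubringClass.subtype (H.cornerSubring e))
  have hT : ((H.corner e).restrict T).Isomorphic ((H.restrict S).corner ⟨e, heS⟩) :=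
    ⟨{ toFun := fun y => ⟨⟨y.1.1, y.2⟩, Subtype.ext y.1.2⟩
       invFun := fun z => ⟨⟨z.1.1, congrArg Subtype.val z.2⟩, z.1.2⟩
       left_inv := fun _ => rfl
       right_inv := fun _ => rfl
       map_mul' := fun _ _ => rfl
       map_add' := fun _ _ => rfl }, fun _ => rfl⟩
  refine ⟨T, ⟨⟨e, H.idem e⟩, heS, fun x => Subtype.ext x.2⟩, ?_⟩
  exact (hT.trans (isomorphic_corner_map φ hφ _)).trans
    (St.corner_isomorphic_of_natCast_eq _ (hc.trans (congrArg (· * (N : ℝ)) (hφ ⟨e, heS⟩).symm)))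

variable {e : H.carrier} {a n₀ : ℕ}

theorem exists_mem_D_dvd_of_mem_D_corner (hu : H.Unital) (hls : H.LocallyStandard) (he : e ≠ 0)
    (ha : (a : ℝ) = H.mu e * n₀) {m : ℕ} (hm : m ∈ (H.corner e).D) :
    ∃ N ∈ H.D, n₀ * m ∣ a * N := by
  have hm0 : (m : ℝ) ≠ 0 := Nat.cast_ne_zero.2 fun h => zero_notMem_D_corner he (h ▸ hm)
  obtain ⟨u, hum⟩ := exists_mu_eq_inv_of_mem_D hm
  have hmu : H.mu e = m * H.mu u.1 := by
    change H.mu u.1 / H.mu e = _ at hum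
    field_simp [(mu_pos he).ne'] at hum
    linarith
  obtain ⟨N, hN, -, S, hS, hiso⟩ := hu.exists_mem_D_isomorphic hls {u.1}
  obtain ⟨w, hw⟩ : ∃ w : ℕ, (w : ℝ) = H.mu u.1 * N :=
    hiso.exists_natCast_eq_mu_mul ⟨u.1, hS (Finset.mem_singleton_self _)⟩
  refine ⟨N, hN, w, ?_⟩
  have : (a : ℝ) * N = n₀ * m * w := by rw [ha, hw, hmu]; ring
  exact_mod_cast this

theorem exists_mem_D_corner_dvd_of_mem_D (hu : H.Unital) (hls : H.LocallyStandard)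
    (ha : (a : ℝ) = H.mu e * n₀) {k : ℕ} (hk : k ∈ H.D) :
    ∃ c ∈ (H.corner e).D, a * k ∣ n₀ * c := by
  classical
  have hk0 : (k : ℝ) ≠ 0 := Nat.cast_ne_zero.2 fun h => hu.zero_notMem_D (h ▸ hk)
  obtain ⟨u, huk⟩ := exists_mu_eq_inv_of_mem_D hk
  obtain ⟨N, -, -, S, hS, hiso⟩ := hu.exists_mem_D_isomorphic hls {e, u}
  have heS : e ∈ S := hS (by simp)
  obtain ⟨c, hc⟩ : ∃ c : ℕ, (c : ℝ) = H.mu e * N := hiso.exists_natCast_eq_mu_mul ⟨e, heS⟩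
  obtain ⟨w, hw⟩ : ∃ w : ℕ, (w : ℝ) = H.mu u * N :=
    hiso.exists_natCast_eq_mu_mul ⟨u, hS (by simp)⟩
  refine ⟨c, mem_D_corner hiso heS hc, w, ?_⟩
  have hN : (N : ℝ) = k * w := by rw [hw, huk]; field_simp
  have : (n₀ : ℝ) * c = a * k * w := by rw [hc, ha, hN]; ring
  exact_mod_cast this

end MeasureAlgebra

/-- Let `(H, μ)` be a unital locally standard measure algebra and `e ≠ 0`. Then
`st(H_e) = μ(e) · st(H)` (where `μ(e)` is a rational number `a/b` with `b ∈ Ω(st H)`).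
In particular, for a standard measure algebra `Stₙ` and `0 ≠ e ∈ Stₙ`, the measure
algebra `(Stₙ)_e` is isomorphic to the standard measure algebra `St_{μₙ(e)·n}`. -/
theorem st_corner_eq_mu_mul_st
    (H : MeasureAlgebra) (hu : H.Unital) (hls : H.LocallyStandard)
    (e : H.carrier) (he : e ≠ 0) :
    (∃ a b : ℕ, 0 < a ∧ 0 < b ∧ H.mu e = (a : ℝ) / b ∧
        SteinitzNumber.NatDvd b H.st ∧
        SteinitzNumber.ofNat b * (H.corner e).st = SteinitzNumber.ofNat a * H.st) ∧
    (∀ (n : ℕ) (x : (MeasureAlgebra.St n).carrier), x ≠ 0 →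
      ∀ m : ℕ, (m : ℝ) = (MeasureAlgebra.St n).mu x * n →
        ((MeasureAlgebra.St n).corner x).Isomorphic (MeasureAlgebra.St m)) := by
  refine ⟨?_, fun n x _ m hm => MeasureAlgebra.St.corner_isomorphic_of_natCast_eq x hm⟩
  obtain ⟨n₀, hn₀D, hn₀, S₀, hS₀, hiso₀⟩ := hu.exists_mem_D_isomorphic hls {e}
  have heS₀ : e ∈ S₀ := hS₀ (Finset.mem_singleton_self e)
  obtain ⟨a, ha⟩ : ∃ a : ℕ, (a : ℝ) = H.mu e * n₀ := hiso₀.exists_natCast_eq_mu_mul ⟨e, heS₀⟩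
  have ha0 : 0 < a := by exact_mod_cast ha ▸ mul_pos (MeasureAlgebra.mu_pos he) (Nat.cast_pos.2 hn₀)
  refine ⟨a, n₀, ha0, hn₀, by rw [ha]; field_simp, SteinitzNumber.natDvd_lcm hn₀D hn₀, ?_⟩
  exact SteinitzNumber.ofNat_mul_lcm_eq ⟨a, MeasureAlgebra.mem_D_corner hiso₀ heS₀ ha⟩
    ha0.ne' hn₀.ne' (MeasureAlgebra.zero_notMem_D_corner he) hu.zero_notMem_D
    (fun m hm => MeasureAlgebra.exists_mem_D_dvd_of_mem_D_corner hu hls he ha hm)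
    (fun k hk => MeasureAlgebra.exists_mem_D_corner_dvd_of_mem_D hu hls ha hk)
end
end
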